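/- Let S be a Polish space and equip P(S) with the topology of weak convergence (the weakest topology making p ↦ ∫ f dp continuous for every bounded continuous f : S → ℝ). Suppose X ∈ L and that the prior Π, defined by Π(C) = P(μ ∈ C) for C ∈ C, has full topological support, i.e. Π(U) > 0 for every nonempty open set U ⊆ P(S). Then ν({x ∈ S : K(x)(A) ≤ u}) < 1 for every u < 1 and every nonempty open set A ⊆ S. -/

import Mathlib

open MeasureTheory ProbabilityTheory Filter Set ENNReal NNReal

noncomputable section

variable {Ω S : Type*}

/-- `K` is a regular conditional distribution for `ν` given the sub-σ-field `G`. -/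
def IsRCD [mS : MeasurableSpace S] (ν : Measure S) (K : S → Measure S)
    (G : MeasurableSpace S) : Prop :=
  G ≤ mS ∧ @Measurable S (@Measure S mS) mS inferInstance K ∧
    (∀ x, IsProbabilityMeasure (K x)) ∧
    (∀ A : Set S, MeasurableSet[mS] A → Measurable[G] fun x => K x A) ∧
    (∀ A : Set S, MeasurableSet[mS] A → ∀ g : Set S, MeasurableSet[G] g →
      ν (A ∩ g) = ∫⁻ x in g, K x A ∂ν)

/-- `σ(X_0, …, X_{n-1})`, the σ-field generated by the first `n` variables. -/
def Filtr [mS : MeasurableSpace S] (X : ℕ → Ω → S) (n : ℕ) : MeasurableSpace Ω :=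
  ⨆ i : Fin n, mS.comap (X i)

/-- The predictive probability `(θ ν(A) + ∑_{i<n} K(X_i)(A)) / (n + θ)`. -/
def predReal [MeasurableSpace S] (X : ℕ → Ω → S) (ν : Measure S) (θ : ℝ)
    (K : S → Measure S) (n : ℕ) (ω : Ω) (A : Set S) : ℝ :=
  (θ * (ν A).toReal + ∑ i ∈ Finset.range n, (K (X i ω) A).toReal) / (n + θ)

/-- Condition (1.1): `X_1 ∼ ν` and the predictive distributions are
`(θ ν + ∑_{i≤n} K(X_i))/(n+θ)`. -/
def Cond11 [MeasurableSpace Ω] [MeasurableSpace S] (P : Measure Ω) (X : ℕ → Ω → S)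
    (ν : Measure S) (θ : ℝ) (K : S → Measure S) : Prop :=
  (∀ n, Measurable (X n)) ∧ P.map (X 0) = ν ∧
    ∀ n : ℕ, 1 ≤ n → ∀ A : Set S, MeasurableSet A →
      P[((X n) ⁻¹' A).indicator (fun _ => (1 : ℝ)) | Filtr X n]
        =ᵐ[P] fun ω => predReal X ν θ K n ω A

/-- `X ∈ L`: condition (1.1) holds and `K` is an r.c.d. for `ν` given some sub-σ-field. -/
def MemL [MeasurableSpace Ω] [mS : MeasurableSpace S] (P : Measure Ω) (X : ℕ → Ω → S)
    (ν : Measure S) (θ : ℝ) (K : S → Measure S) : Prop :=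
  Cond11 P X ν θ K ∧ ∃ G : MeasurableSpace S, IsRCD (mS := mS) ν K G

/-- `μ` is a random probability measure directing `X`:
`μ(A) = lim_n (1/n) ∑_{i≤n} 1_A(X_i)` a.s. for every `A`. -/
def IsDirecting [MeasurableSpace Ω] [MeasurableSpace S] (P : Measure Ω) (X : ℕ → Ω → S)
    (μ : Ω → Measure S) : Prop :=
  Measurable μ ∧ (∀ ω, IsProbabilityMeasure (μ ω)) ∧
    ∀ A : Set S, MeasurableSet A →
      ∀ᵐ ω ∂P, Tendsto
        (fun n : ℕ => (∑ i ∈ Finset.range n, A.indicator (fun _ => (1 : ℝ)) (X i ω)) / n)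
        atTop (nhds ((μ ω A).toReal))

/-- Exchangeability of the sequence `X`. -/
def Exchangeable [MeasurableSpace Ω] [MeasurableSpace S] (P : Measure Ω)
    (X : ℕ → Ω → S) : Prop :=
  ∀ n : ℕ, ∀ τ : Equiv.Perm (Fin n),
    P.map (fun ω (i : Fin n) => X (τ i) ω) = P.map (fun ω (i : Fin n) => X i ω)

/-- The Beta(1, θ) law on ℝ, with density `w ↦ θ (1-w)^(θ-1)` on `(0,1)`. -/
def betaOneMeasure (θ : ℝ) : Measure ℝ :=
  (volume : Measure ℝ).withDensity
    ((Set.Ioo (0 : ℝ) 1).indicator fun w => ENNReal.ofReal (θ * (1 - w) ^ (θ - 1)))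

/-- `σ` is the stick-breaking law with parameter `θ` on sequences:
the law of `(T_n)` where `T_n = W_n ∏_{i<n} (1 - W_i)` and `(W_n)` is i.i.d. Beta(1, θ). -/
def IsStickBreakingLaw (θ : ℝ) (σ : Measure (ℕ → ℝ)) : Prop :=
  ∃ (Ω' : Type) (_ : MeasurableSpace Ω') (Q : Measure Ω') (W : ℕ → Ω' → ℝ),
    IsProbabilityMeasure Q ∧ (∀ n, Measurable (W n)) ∧
    iIndepFun W Q ∧ (∀ n, Q.map (W n) = betaOneMeasure θ) ∧
    σ = Q.map fun ω' (j : ℕ) => W j ω' * ∏ i ∈ Finset.range j, (1 - W i ω')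

/-- `(V_n)` has the stick-breaking distribution with parameter `θ`. -/
def IsStickBreaking [MeasurableSpace Ω] (P : Measure Ω) (θ : ℝ) (V : ℕ → Ω → ℝ) : Prop :=
  ∃ σ : Measure (ℕ → ℝ), IsStickBreakingLaw θ σ ∧ P.map (fun ω (j : ℕ) => V j ω) = σ

/-- The random measure `∑_j V_j K(Z_j)`. -/
def mixSum [MeasurableSpace S] (K : S → Measure S) (V : ℕ → Ω → ℝ) (Z : ℕ → Ω → S)
    (ω : Ω) : Measure S :=
  Measure.sum fun j => ENNReal.ofReal (V j ω) • K (Z j ω)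

/-- `σ(K)`: the sub-σ-field of `S` generated by the kernel `K`. -/
def sigmaK [mS : MeasurableSpace S] (K : S → Measure S) : MeasurableSpace S :=
  MeasurableSpace.comap K inferInstance

/-- `γ` is the `p`-dimensional Gaussian law `N_p(0, M)`: every linear functional
`y ↦ ∑ i, b i * y i` has the one-dimensional Gaussian law with mean `0` and
variance `bᵀ M b`. -/
def IsGaussN {p : ℕ} (M : Matrix (Fin p) (Fin p) ℝ)
    (γ : Measure (EuclideanSpace ℝ (Fin p))) : Prop :=
  ∀ b : Fin p → ℝ,
    γ.map (fun y => ∑ i, b i * y i) =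
      gaussianReal 0 (Real.toNNReal (∑ i, ∑ j, b i * M i j * b j))

/-- The matrix of second moments `(∫ y_i y_j dλ)_{i,j}` of a measure `λ` on `ℝ^p`. -/
def covMatrix {p : ℕ} (lam : Measure (EuclideanSpace ℝ (Fin p))) :
    Matrix (Fin p) (Fin p) ℝ :=
  Matrix.of fun i j => ∫ y, y i * y j ∂lam

/-- The σ-field of measurable sets invariant under every `f i`. -/
def invariantSigma {ι : Type*} [mS : MeasurableSpace S] (f : ι → S → S) :
    MeasurableSpace S where
  MeasurableSet' A := MeasurableSet[mS] A ∧ ∀ i, f i ⁻¹' A = A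
  measurableSet_empty := ⟨MeasurableSet.empty, fun _ => Set.preimage_empty⟩
  measurableSet_compl A hA := ⟨hA.1.compl, fun i => by rw [Set.preimage_compl, hA.2 i]⟩
  measurableSet_iUnion g hg := ⟨MeasurableSet.iUnion fun k => (hg k).1,
    fun i => by rw [Set.preimage_iUnion]; exact Set.iUnion_congr fun k => (hg k).2 i⟩

/-!
If `K x A ≤ u < 1` for `ν`-a.e. `x`, then every `X i` has a law `≪ ν` (the disintegration
`ν = ν.bind K` makes `ν`-null sets predictively null), so almost surely all `K (X i) A ≤ u` and the
predictive probabilities of `A` are eventually below some `c < 1`. By Cesàro averaging and Lévy's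
upward theorem the limiting frequency `μ A` is then `≤ c` almost surely, while
`{p | c < p A}` is a nonempty open set of laws, contradicting full support.
-/

open Topology

section Filtr

variable [MeasurableSpace S] {X : ℕ → Ω → S}

lemma filtr_mono (X : ℕ → Ω → S) : Monotone (Filtr X) :=
  fun _ _ hnm => iSup_le fun i => le_iSup_of_le (Fin.castLE hnm i) le_rfl

lemma filtr_le [m0 : MeasurableSpace Ω] (hX : ∀ n, Measurable (X n)) (n : ℕ) : Filtr X n ≤ m0 :=
  iSup_le fun i => (hX i).comap_le

lemma measurable_filtr {i n : ℕ} (h : i < n) : Measurable[Filtr X n] (X i) :=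
  Measurable.of_comap_le (le_iSup_of_le (⟨i, h⟩ : Fin n) le_rfl)

def filtrFiltration [m0 : MeasurableSpace Ω] (hX : ∀ n, Measurable (X n)) : Filtration ℕ m0 :=
  ⟨Filtr X, filtr_mono X, filtr_le hX⟩

end Filtr

lemma predReal_le [MeasurableSpace S] {X : ℕ → Ω → S} {ν : Measure S} [IsProbabilityMeasure ν]
    {θ : ℝ} (hθ : 0 < θ) {K : S → Measure S} {A : Set S} {u : ℝ≥0∞} (hu : u ≠ ∞) (n : ℕ)
    (ω : Ω) (hK : ∀ j ∈ Finset.range n, K (X j ω) A ≤ u) :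
    predReal X ν θ K n ω A ≤ u.toReal + θ / (n + θ) := by
  have hpos : (0 : ℝ) < n + θ := by positivity
  have hν : (ν A).toReal ≤ 1 := ENNReal.toReal_le_of_le_ofReal zero_le_one (by simp [prob_le_one])
  have hsum : ∑ j ∈ Finset.range n, (K (X j ω) A).toReal ≤ n * u.toReal := by
    simpa using Finset.sum_le_sum fun j hj => ENNReal.toReal_mono hu (hK j hj)
  rw [predReal, div_le_iff₀ hpos, add_mul, div_mul_cancel₀ _ hpos.ne']
  nlinarith [mul_le_mul_of_nonneg_left hν hθ.le, mul_nonneg (toReal_nonneg (a := u)) hθ.le]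

section Kernel

variable [MeasurableSpace Ω] [MeasurableSpace S] {P : Measure Ω} {X : ℕ → Ω → S}
  {ν : Measure S} {θ : ℝ} {K : S → Measure S}

lemma MemL.measurable_kernel (hL : MemL P X ν θ K) : Measurable K := by
  obtain ⟨-, G, hG⟩ := hL
  exact hG.2.1

lemma MemL.bind_eq (hL : MemL P X ν θ K) : ν.bind K = ν := by
  obtain ⟨-, G, -, hK, -, -, hG⟩ := hL
  have hG_univ := fun N hN => hG N hN univ (@MeasurableSet.univ S G)
  -- otherwise `G` would be found as the `MeasurableSpace S` instance below
  clear hG G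
  refine Measure.ext fun N hN => ?_
  rw [Measure.bind_apply hN hK.aemeasurable]
  simpa using (hG_univ N hN).symm

lemma Cond11.measureReal_preimage_eq_integral [IsFiniteMeasure P] (h : Cond11 P X ν θ K)
    {n : ℕ} (hn : 1 ≤ n) {A : Set S} (hA : MeasurableSet A) :
    P.real (X n ⁻¹' A) = ∫ ω, predReal X ν θ K n ω A ∂P := by
  rw [← integral_congr_ae (h.2.2 n hn A hA), integral_condExp (filtr_le h.1 n),
    integral_indicator_const _ (h.1 n hA), smul_eq_mul, mul_one]

lemma MemL.map_absolutelyContinuous [IsFiniteMeasure P] (hL : MemL P X ν θ K) (i : ℕ) :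
    P.map (X i) ≪ ν := by
  obtain ⟨hX, hX0, -⟩ := hL.1
  have hKnull : ∀ N, MeasurableSet N → ν N = 0 → ∀ᵐ x ∂ν, K x N = 0 := fun N hN hνN => by
    have hKN : Measurable fun x => K x N := (Measure.measurable_coe hN).comp hL.measurable_kernel
    rwa [← hL.bind_eq, Measure.bind_apply hN hL.measurable_kernel.aemeasurable,
      lintegral_eq_zero_iff hKN] at hνN
  induction i using Nat.strong_induction_on with
  | _ i ih =>
  rcases Nat.eq_zero_or_pos i with rfl | hi
  · rw [hX0]
  refine Measure.AbsolutelyContinuous.mk fun N hN hνN => ?_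
  have hK : ∀ᵐ ω ∂P, ∀ j ∈ Finset.range i, K (X j ω) N = 0 :=
    (eventually_all_finset _).2 fun j hj => ae_of_ae_map (hX j).aemeasurable
      ((ih j (Finset.mem_range.1 hj)).ae_le (hKnull N hN hνN))
  have hpred : (fun ω => predReal X ν θ K i ω N) =ᵐ[P] fun _ => 0 := hK.mono fun ω hω => by
    have hsum : ∑ j ∈ Finset.range i, (K (X j ω) N).toReal = 0 :=
      Finset.sum_eq_zero fun j hj => by rw [hω j hj, toReal_zero]
    simp [predReal, hνN, hsum]
  rw [Measure.map_apply (hX i) hN, ← measureReal_eq_zero_iff,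
    hL.1.measureReal_preimage_eq_integral hi hN, integral_congr_ae hpred, integral_zero]

lemma MemL.eventually_condExp_indicator_le [IsProbabilityMeasure P] [IsProbabilityMeasure ν]
    (hL : MemL P X ν θ K) (hθ : 0 < θ) {A : Set S} (hA : MeasurableSet A) {u : ℝ≥0∞}
    (hu : u ≠ ∞) (hKν : ∀ᵐ x ∂ν, K x A ≤ u) {c : ℝ} (hc : u.toReal < c) :
    ∀ᶠ n in atTop, P[fun ω => A.indicator (fun _ => (1 : ℝ)) (X n ω) | Filtr X n]
      ≤ᵐ[P] fun _ => c := by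
  have hKP : ∀ᵐ ω ∂P, ∀ j, K (X j ω) A ≤ u := ae_all_iff.2 fun j =>
    ae_of_ae_map (hL.1.1 j).aemeasurable ((hL.map_absolutelyContinuous j).ae_le hKν)
  have hsmall : ∀ᶠ n : ℕ in atTop, θ / (n + θ) < c - u.toReal :=
    (tendsto_const_nhds.div_atTop (tendsto_atTop_add_const_right atTop θ
      tendsto_natCast_atTop_atTop)).eventually (gt_mem_nhds (sub_pos.2 hc))
  filter_upwards [hsmall, eventually_ge_atTop 1] with n hn hn1
  filter_upwards [hL.1.2.2 n hn1 A hA, hKP] with ω hω hKω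
  refine hω.trans_le ((predReal_le hθ hu n ω fun j _ => hKω j).trans ?_)
  linarith

end Kernel

lemma le_of_tendsto_cesaro {a : ℕ → ℝ} {L l : ℝ} (ha : ∀ᶠ i in atTop, a i ≤ L)
    (hl : Tendsto (fun m : ℕ => (∑ i ∈ Finset.range m, a i) / m) atTop (𝓝 l)) : l ≤ L := by
  set d : ℕ → ℝ := fun i => max (a i - L) 0
  have hd : Tendsto d atTop (𝓝 0) :=
    tendsto_const_nhds.congr' (ha.mono fun i hi => (max_eq_right (by linarith)).symm)
  have hbound : ∀ᶠ m : ℕ in atTop,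
      (∑ i ∈ Finset.range m, a i) / m ≤ L + (m : ℝ)⁻¹ * ∑ i ∈ Finset.range m, d i := by
    filter_upwards [eventually_gt_atTop 0] with m hm
    have hm' : (0 : ℝ) < m := by exact_mod_cast hm
    have : ∑ i ∈ Finset.range m, a i ≤ ∑ i ∈ Finset.range m, (L + d i) :=
      Finset.sum_le_sum fun i _ => by linarith [le_max_left (a i - L) 0]
    rw [Finset.sum_add_distrib, Finset.sum_const, Finset.card_range, nsmul_eq_mul] at this
    rw [div_le_iff₀ hm', add_mul, inv_mul_eq_div, div_mul_cancel₀ _ hm'.ne']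
    linarith
  simpa using le_of_tendsto_of_tendsto hl (tendsto_const_nhds.add hd.cesaro) hbound

lemma measurable_cesaro {m : MeasurableSpace Ω} {Z : ℕ → Ω → ℝ} (hZ : ∀ i, Measurable (Z i))
    (k : ℕ) : Measurable fun ω => (∑ i ∈ Finset.range k, Z i ω) / k :=
  (Finset.measurable_sum _ fun i _ => hZ i).div_const _

lemma abs_cesaro_le {Z : ℕ → Ω → ℝ} {C : ℝ} (hZb : ∀ i ω, |Z i ω| ≤ C) (m : ℕ) (ω : Ω) :
    |(∑ i ∈ Finset.range m, Z i ω) / m| ≤ C := by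
  rcases Nat.eq_zero_or_pos m with rfl | hm
  · simpa using (abs_nonneg _).trans (hZb 0 ω)
  have hm' : (0 : ℝ) < m := by exact_mod_cast hm
  rw [abs_div, Nat.abs_cast, div_le_iff₀ hm']
  calc |∑ i ∈ Finset.range m, Z i ω| ≤ ∑ i ∈ Finset.range m, |Z i ω| :=
        Finset.abs_sum_le_sum_abs _ _
    _ ≤ ∑ _i ∈ Finset.range m, C := Finset.sum_le_sum fun i _ => hZb i ω
    _ = C * m := by simp [mul_comm]

lemma condExp_ae_le_const_of_setIntegral_le {m m0 : MeasurableSpace Ω} (hm : m ≤ m0)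
    {μ : Measure Ω} [IsFiniteMeasure μ] {f : Ω → ℝ} (hf : Integrable f μ) {c : ℝ}
    (h : ∀ s, MeasurableSet[m] s → ∫ x in s, f x ∂μ ≤ c * μ.real s) :
    μ[f | m] ≤ᵐ[μ] fun _ => c := by
  refine ae_le_of_ae_le_trim (hm := hm) (ae_le_of_forall_setIntegral_le
    (integrable_condExp.trim hm stronglyMeasurable_condExp) (integrable_const c) fun s hs _ => ?_)
  rw [← setIntegral_trim hm stronglyMeasurable_condExp hs,
    ← setIntegral_trim hm stronglyMeasurable_const hs, setIntegral_condExp hm hf hs,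
    setIntegral_const, smul_eq_mul, mul_comm]
  exact h s hs

section Cesaro

variable {m0 : MeasurableSpace Ω} {P : Measure Ω} [IsFiniteMeasure P] {ℱ : Filtration ℕ m0}
  {Z : ℕ → Ω → ℝ} {Y : Ω → ℝ} {C c : ℝ}

lemma setIntegral_le_of_tendsto_cesaro (hZm : ∀ i, Measurable (Z i))
    (hZb : ∀ i ω, |Z i ω| ≤ C) (hZc : ∀ᶠ i in atTop, P[Z i | ℱ i] ≤ᵐ[P] fun _ => c)
    (hY : ∀ᵐ ω ∂P,
      Tendsto (fun m : ℕ => (∑ i ∈ Finset.range m, Z i ω) / m) atTop (𝓝 (Y ω)))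
    {n : ℕ} {s : Set Ω} (hs : MeasurableSet[ℱ n] s) :
    ∫ ω in s, Y ω ∂P ≤ c * P.real s := by
  have hint : ∀ i, Integrable (Z i) P := fun i => Integrable.of_bound (hZm i).aestronglyMeasurable
    C (ae_of_all _ fun ω => (Real.norm_eq_abs _).trans_le (hZb i ω))
  have hlim : Tendsto (fun m : ℕ => ∫ ω in s, (∑ i ∈ Finset.range m, Z i ω) / m ∂P) atTop
      (𝓝 (∫ ω in s, Y ω ∂P)) :=
    tendsto_integral_of_dominated_convergence (fun _ => C)
      (fun m => (measurable_cesaro hZm m).aestronglyMeasurable)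
      (integrable_const C)
      (fun m => ae_of_all _ fun ω => (Real.norm_eq_abs _).trans_le (abs_cesaro_le hZb m ω))
      (ae_restrict_of_ae hY)
  refine le_of_tendsto_cesaro (a := fun i => ∫ ω in s, Z i ω ∂P) ?_ (hlim.congr fun m => ?_)
  · filter_upwards [hZc, eventually_ge_atTop n] with i hi hni
    calc ∫ ω in s, Z i ω ∂P = ∫ ω in s, P[Z i | ℱ i] ω ∂P :=
          (setIntegral_condExp (ℱ.le i) (hint i) (ℱ.mono hni s hs)).symm
      _ ≤ ∫ _ in s, c ∂P :=
          setIntegral_mono_ae integrable_condExp.integrableOn (integrable_const c).integrableOn hi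
      _ = c * P.real s := by rw [setIntegral_const, smul_eq_mul, mul_comm]
  · rw [integral_div, integral_finsetSum _ fun i _ => (hint i).integrableOn]

/-- The bound passes from `𝔼[Y | ℱ n]` to `Y` by Lévy's upward theorem, since the Cesàro limit
`Y` is a.e. `⨆ n, ℱ n`-measurable. -/
theorem ae_le_of_tendsto_cesaro_of_condExp_le (hZm : ∀ i, Measurable[⨆ n, ℱ n] (Z i))
    (hZb : ∀ i ω, |Z i ω| ≤ C) (hZc : ∀ᶠ i in atTop, P[Z i | ℱ i] ≤ᵐ[P] fun _ => c)
    (hY : ∀ᵐ ω ∂P,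
      Tendsto (fun m : ℕ => (∑ i ∈ Finset.range m, Z i ω) / m) atTop (𝓝 (Y ω))) :
    ∀ᵐ ω ∂P, Y ω ≤ c := by
  have hZm' : ∀ i, Measurable (Z i) := fun i => (hZm i).mono (iSup_le ℱ.le) le_rfl
  set Y' : Ω → ℝ := fun ω => limsup (fun m : ℕ => (∑ i ∈ Finset.range m, Z i ω) / m) atTop
  have hY' : Y' =ᵐ[P] Y := hY.mono fun ω h => h.limsup_eq
  have hY'm : StronglyMeasurable[⨆ n, ℱ n] Y' :=
    (Measurable.limsup (measurable_cesaro hZm)).stronglyMeasurable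
  have hYint : Integrable Y P :=
    Integrable.of_bound (aestronglyMeasurable_of_tendsto_ae _ (fun m =>
        (measurable_cesaro hZm' m).aestronglyMeasurable) hY)
      C (hY.mono fun ω h => le_of_tendsto' h.norm fun m =>
        (Real.norm_eq_abs _).trans_le (abs_cesaro_le hZb m ω))
  have hcond : ∀ᵐ ω ∂P, ∀ n, P[Y' | ℱ n] ω ≤ c := ae_all_iff.2 fun n =>
    (condExp_congr_ae hY').trans_le (condExp_ae_le_const_of_setIntegral_le (ℱ.le n) hYint
      fun _ hs => setIntegral_le_of_tendsto_cesaro hZm' hZb hZc hY hs)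
  filter_upwards [(hYint.congr hY'.symm).tendsto_ae_condExp hY'm, hY', hcond] with ω hlevy hω hc
  exact hω ▸ le_of_tendsto' hlevy hc

end Cesaro

lemma IsDirecting.ae_toReal_le_of_condExp_le [MeasurableSpace Ω] [MeasurableSpace S]
    {P : Measure Ω} [IsFiniteMeasure P] {X : ℕ → Ω → S} {μ : Ω → Measure S}
    (hμ : IsDirecting P X μ) (hX : ∀ n, Measurable (X n)) {A : Set S} (hA : MeasurableSet A)
    {c : ℝ} (hc : ∀ᶠ n in atTop,
      P[fun ω => A.indicator (fun _ => (1 : ℝ)) (X n ω) | Filtr X n] ≤ᵐ[P] fun _ => c) :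
    ∀ᵐ ω ∂P, (μ ω A).toReal ≤ c :=
  ae_le_of_tendsto_cesaro_of_condExp_le (ℱ := filtrFiltration hX) (C := 1)
    (Z := fun i ω => A.indicator (fun _ => 1) (X i ω))
    (fun i => (((measurable_const.indicator hA).comp (measurable_filtr i.lt_succ_self)).mono
      (le_iSup (filtrFiltration hX) (i + 1)) le_rfl))
    (fun i ω => by by_cases h : X i ω ∈ A <;> simp [h]) hc (hμ.2.2 A hA)

lemma ProbabilityMeasure.isOpen_setOf_lt_measure [MeasurableSpace S] [TopologicalSpace S]
    [OpensMeasurableSpace S] [HasOuterApproxClosed S] {G : Set S} (hG : IsOpen G) (c : ℝ≥0∞) :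
    IsOpen {p : ProbabilityMeasure S | c < (p : Measure S) G} :=
  isOpen_iff_mem_nhds.2 fun p hp => eventually_lt_of_lt_liminf
    (hp.trans_le (ProbabilityMeasure.le_liminf_measure_open_of_tendsto tendsto_id hG))

theorem stmt_18 {Ω S : Type*} [MeasurableSpace Ω] [TopologicalSpace S] [PolishSpace S]
    [mS : MeasurableSpace S] [BorelSpace S]
    (P : Measure Ω) [IsProbabilityMeasure P] (X : ℕ → Ω → S) (ν : Measure S)
    [IsProbabilityMeasure ν] (θ : ℝ) (hθ : 0 < θ) (K : S → Measure S)
    (hL : MemL P X ν θ K) (μ : Ω → Measure S) (hμ : IsDirecting P X μ)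
    (hfull : ∀ U : Set (ProbabilityMeasure S), IsOpen U → U.Nonempty →
      0 < P {ω | (⟨μ ω, hμ.2.1 ω⟩ : ProbabilityMeasure S) ∈ U}) :
    ∀ u : ℝ≥0∞, u < 1 → ∀ A : Set S, IsOpen A → A.Nonempty →
      ν {x | K x A ≤ u} < 1 := by
  intro u hu A hA ⟨a, haA⟩
  by_contra! hνK
  have hAm := hA.measurableSet
  obtain ⟨c, hbc, hc1⟩ : ∃ c, u.toReal < c ∧ c < 1 :=
    exists_between (by simpa using (toReal_lt_toReal hu.ne_top one_ne_top).2 hu)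
  have hKν : ∀ᵐ x ∂ν, K x A ≤ u := ae_iff.2 <| (prob_compl_eq_zero_iff <| measurableSet_le
    ((Measure.measurable_coe hAm).comp hL.measurable_kernel) measurable_const).2
    (le_antisymm prob_le_one hνK)
  have hμA : ∀ᵐ ω ∂P, (μ ω A).toReal ≤ c := hμ.ae_toReal_le_of_condExp_le hL.1.1 hAm
    (hL.eventually_condExp_indicator_le hθ hAm hu.ne_top hKν hbc)
  have hU := ProbabilityMeasure.isOpen_setOf_lt_measure hA (ENNReal.ofReal c)
  refine (hfull _ hU ⟨⟨Measure.dirac a, inferInstance⟩,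
    show ENNReal.ofReal c < Measure.dirac a A by simpa [haA] using hc1⟩).ne' ?_
  refine measure_eq_zero_iff_ae_notMem.2 (hμA.mono fun ω hω => ?_)
  have := hμ.2.1 ω
  exact not_lt.2 <|
    (le_ofReal_iff_toReal_le (measure_ne_top _ _) (toReal_nonneg.trans hbc.le)).2 hω

end
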